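/- Fix formulas ψ1,…,ψk and, for holey {∃,∧}-formulas α with holes among 1,…,k, define the multiset mset_𝒯(α) of sets of variables inductively: mset_𝒯(i) = {free(ψi)} (multiplicity 1) for a hole i; mset_𝒯(φ1 ∧ φ2) = mset_𝒯(φ1) ⊎ mset_𝒯(φ2) (multiset union); and mset_𝒯(∃x φ1) is obtained from mset_𝒯(φ1) by removing every element that contains x and adding the single set (the union of all removed elements) ∖ {x}. Then mset_𝒯(α) is invariant under applications of the rules in 𝒯∖{N} to α (applied under the association i ↦ free(ψi)): if α →_{𝒯∖{N}} α′ then mset_𝒯(α) = mset_𝒯(α′). -/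
import Mathlib


namespace WidthPaper

/-- Positive (relational) first-order formulas: atoms `R(v₁,…,vₖ)` (relation symbol
coded by a natural number, arguments a list of variables), binary `∧`, binary `∨`,
and quantifications `∃x`, `∀x`. -/
inductive PFO : Type where
  | atom : ℕ → List ℕ → PFO
  | conj : PFO → PFO → PFO
  | disj : PFO → PFO → PFO
  | ex   : ℕ → PFO → PFO
  | all  : ℕ → PFO → PFO
  deriving DecidableEq

namespace PFO

/-- Free variables of a pfo-formula. -/
def free : PFO → Finset ℕ
  | .atom _ vs => vs.toFinset
  | .conj f g => free f ∪ free g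
  | .disj f g => free f ∪ free g
  | .ex x f => free f \ {x}
  | .all x f => free f \ {x}

/-- Replace every free occurrence of `x` by `y`. -/
def rename (x y : ℕ) : PFO → PFO
  | .atom r vs => .atom r (vs.map fun v => if v = x then y else v)
  | .conj f g => .conj (rename x y f) (rename x y g)
  | .disj f g => .disj (rename x y f) (rename x y g)
  | .ex z f => if z = x then .ex z f else .ex z (rename x y f)
  | .all z f => if z = x then .all z f else .all z (rename x y f)

/-- Associativity rule (at the root). -/
inductive RA : PFO → PFO → Prop
  | conj1 (f g h : PFO) : RA (.conj f (.conj g h)) (.conj (.conj f g) h)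
  | conj2 (f g h : PFO) : RA (.conj (.conj f g) h) (.conj f (.conj g h))
  | disj1 (f g h : PFO) : RA (.disj f (.disj g h)) (.disj (.disj f g) h)
  | disj2 (f g h : PFO) : RA (.disj (.disj f g) h) (.disj f (.disj g h))

/-- Commutativity rule (at the root). -/
inductive RC : PFO → PFO → Prop
  | conj (f g : PFO) : RC (.conj f g) (.conj g f)
  | disj (f g : PFO) : RC (.disj f g) (.disj g f)

/-- Reordering rule (at the root): `QxQyF → QyQxF`. -/
inductive RO : PFO → PFO → Prop
  | ex (x y : ℕ) (f : PFO) : RO (.ex x (.ex y f)) (.ex y (.ex x f))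
  | all (x y : ℕ) (f : PFO) : RO (.all x (.all y f)) (.all y (.all x f))

/-- Pushdown rule (at the root). -/
inductive RPd : PFO → PFO → Prop
  | ex (x : ℕ) (f g : PFO) : x ∉ free g → RPd (.ex x (.conj f g)) (.conj (.ex x f) g)
  | all (x : ℕ) (f g : PFO) : x ∉ free g → RPd (.all x (.disj f g)) (.disj (.all x f) g)

/-- Pushup rule: the inverse of pushdown. -/
def RPu : PFO → PFO → Prop := fun f g => RPd g f

/-- Renaming rule (at the root). -/
inductive RN : PFO → PFO → Prop
  | ex (x y : ℕ) (f : PFO) : y ∉ free f → RN (.ex x f) (.ex y (rename x y f))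
  | all (x y : ℕ) (f : PFO) : y ∉ free f → RN (.all x f) (.all y (rename x y f))

/-- Splitdown rule (at the root). -/
inductive RSd : PFO → PFO → Prop
  | ex (x : ℕ) (f g : PFO) : RSd (.ex x (.disj f g)) (.disj (.ex x f) (.ex x g))
  | all (x : ℕ) (f g : PFO) : RSd (.all x (.conj f g)) (.conj (.all x f) (.all x g))

/-- Splitup rule: the inverse of splitdown. -/
def RSu : PFO → PFO → Prop := fun f g => RSd g f

/-- Removal rule (at the root). -/
inductive RM : PFO → PFO → Prop
  | ex (x : ℕ) (f : PFO) : x ∉ free f → RM (.ex x f) f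
  | all (x : ℕ) (f : PFO) : x ∉ free f → RM (.all x f) f

/-- Closure of a root rewriting relation under application at any subformula position. -/
inductive Step (r : PFO → PFO → Prop) : PFO → PFO → Prop
  | root {f g} : r f g → Step r f g
  | conjL {f f' g} : Step r f f' → Step r (.conj f g) (.conj f' g)
  | conjR {f g g'} : Step r g g' → Step r (.conj f g) (.conj f g')
  | disjL {f f' g} : Step r f f' → Step r (.disj f g) (.disj f' g)
  | disjR {f g g'} : Step r g g' → Step r (.disj f g) (.disj f g')
  | exC {x f f'} : Step r f f' → Step r (.ex x f) (.ex x f')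
  | allC {x f f'} : Step r f f' → Step r (.all x f) (.all x f')

/-- Union of the root rules in ACO = {A, C, O}. -/
def rACO : PFO → PFO → Prop := fun f g => RA f g ∨ RC f g ∨ RO f g

/-- Union of the root rules in 𝒯 = {A, C, O, P↓, P↑, N}. -/
def rT : PFO → PFO → Prop := fun f g => rACO f g ∨ RPd f g ∨ RPu f g ∨ RN f g

/-- Union of the root rules in 𝒯 ∖ {N} = {A, C, O, P↓, P↑}. -/
def rTnoN : PFO → PFO → Prop := fun f g => rACO f g ∨ RPd f g ∨ RPu f g

/-- Union of the root rules {P↓, S↓, M} (the reduction of the system Y). -/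
def rY : PFO → PFO → Prop := fun f g => RPd f g ∨ RSd f g ∨ RM f g

/-- Union of the root rules {S↓, M} (the reduction of the system Y′). -/
def rYp : PFO → PFO → Prop := fun f g => RSd f g ∨ RM f g

/-- Union of all the root rules 𝒜 = 𝒯 ∪ {S↓, S↑, M}. -/
def rAll : PFO → PFO → Prop := fun f g => rT f g ∨ RSd f g ∨ RSu f g ∨ RM f g

/-- The ↔*_R-equivalence class `[φ]_R` of `φ`, for the root-rule union `r`. -/
def eqvCls (r : PFO → PFO → Prop) (φ : PFO) : Set PFO :=
  {ψ | Relation.EqvGen (Step r) φ ψ}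

/-- A rule (given by its root relation) is applicable to a formula if it can be applied
at some subformula position. -/
def Applicable (r : PFO → PFO → Prop) (φ : PFO) : Prop := ∃ ψ, Step r φ ψ

/-- A rule is applicable to a set of formulas if it is applicable to some member. -/
def ApplicableSet (r : PFO → PFO → Prop) (S : Set PFO) : Prop := ∃ φ ∈ S, Applicable r φ

/-- Number of nodes of the syntax tree. -/
def size : PFO → ℕ
  | .atom _ _ => 1
  | .conj f g => size f + size g + 1
  | .disj f g => size f + size g + 1
  | .ex _ f => size f + 1
  | .all _ f => size f + 1

/-- List of all subformula occurrences. -/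
def subformulas : PFO → List PFO
  | .atom r vs => [.atom r vs]
  | .conj f g => .conj f g :: (subformulas f ++ subformulas g)
  | .disj f g => .disj f g :: (subformulas f ++ subformulas g)
  | .ex x f => .ex x f :: subformulas f
  | .all x f => .all x f :: subformulas f

/-- The width of a formula: the maximum number of free variables over all subformulas. -/
def width (φ : PFO) : ℕ := ((subformulas φ).map fun ψ => (free ψ).card).foldr max 0

/-- The width of a set of formulas: the minimum width over its members. -/
noncomputable def setWidth (S : Set PFO) : ℕ := sInf (width '' S)

/-- The setoid of ↔*_ACO-equivalence. -/
def acoSetoid : Setoid PFO := ⟨Relation.EqvGen (Step rACO), Relation.EqvGen.is_equivalence _⟩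

/-- The setoid of ↔*_𝒯-equivalence. -/
def tSetoid : Setoid PFO := ⟨Relation.EqvGen (Step rT), Relation.EqvGen.is_equivalence _⟩

/-- The reduction of a quotient system `(PFO, Step r) / s`:  `C → C′` iff there are
`d ∈ C` and `d′ ∈ C′` with `Step r d d′`. -/
def qStep (s : Setoid PFO) (r : PFO → PFO → Prop) (C C' : Quotient s) : Prop :=
  ∃ d d', C = Quotient.mk s d ∧ C' = Quotient.mk s d' ∧ Step r d d'

/-- The multiset of quantified-variable occurrences of a formula. -/
def quantVars : PFO → Multiset ℕ
  | .atom _ _ => 0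
  | .conj f g => quantVars f + quantVars g
  | .disj f g => quantVars f + quantVars g
  | .ex x f => x ::ₘ quantVars f
  | .all x f => x ::ₘ quantVars f

/-- A formula is standardized if no variable is quantified at two different occurrences
and no quantified variable is free in the whole formula. -/
def Standardized (φ : PFO) : Prop :=
  (quantVars φ).Nodup ∧ ∀ x ∈ quantVars φ, x ∉ free φ

/-- A formula is pushed-down if the pushdown rule is not applicable to it. -/
def PushedDown (φ : PFO) : Prop := ¬ Applicable RPd φ

/-- A set of formulas is pushed-down if each member is pushed-down. -/
def PushedDownSet (S : Set PFO) : Prop := ∀ φ ∈ S, PushedDown φ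

/-- The multiset of conjuncts of a formula (collapsing the top `∧`-structure). -/
def conjuncts : PFO → Multiset PFO
  | .conj f g => conjuncts f + conjuncts g
  | .atom r vs => {PFO.atom r vs}
  | .disj f g => {PFO.disj f g}
  | .ex x f => {PFO.ex x f}
  | .all x f => {PFO.all x f}

/-- The multiset of disjuncts of a formula (collapsing the top `∨`-structure). -/
def disjuncts : PFO → Multiset PFO
  | .disj f g => disjuncts f + disjuncts g
  | .atom r vs => {PFO.atom r vs}
  | .conj f g => {PFO.conj f g}
  | .ex x f => {PFO.ex x f}
  | .all x f => {PFO.all x f}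

/-- Number of atoms of a formula. -/
def atomCount : PFO → ℕ
  | .atom _ _ => 1
  | .conj f g => atomCount f + atomCount g
  | .disj f g => atomCount f + atomCount g
  | .ex _ f => atomCount f
  | .all _ f => atomCount f

/-- `φ` is an atom. -/
def isAtom : PFO → Prop
  | .atom _ _ => True
  | _ => False

/-- The top operation of `φ` is `∃` or `∧`. -/
def topEA : PFO → Prop
  | .conj _ _ => True
  | .ex _ _ => True
  | _ => False

/-- The top operation of `φ` is `∀` or `∨`. -/
def topAO : PFO → Prop
  | .disj _ _ => True
  | .all _ _ => True
  | _ => False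

/-- `φ` is an {∃,∧}-formula (built from atoms using only `∧` and `∃`). -/
def isEAFormula : PFO → Prop
  | .atom _ _ => True
  | .conj f g => isEAFormula f ∧ isEAFormula g
  | .ex _ f => isEAFormula f
  | _ => False

end PFO

open PFO

/-- Holey pfo-formulas: leaves are natural-number holes. -/
inductive Holey : Type where
  | hole : ℕ → Holey
  | conj : Holey → Holey → Holey
  | disj : Holey → Holey → Holey
  | ex   : ℕ → Holey → Holey
  | all  : ℕ → Holey → Holey
  deriving DecidableEq

namespace Holey

/-- The multiset of hole occurrences. -/
def holes : Holey → Multiset ℕ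
  | .hole i => {i}
  | .conj f g => holes f + holes g
  | .disj f g => holes f + holes g
  | .ex _ f => holes f
  | .all _ f => holes f

/-- A holey {∃,∧}-formula: uses only holes, `∧` and `∃`. -/
def isEA : Holey → Prop
  | .hole _ => True
  | .conj f g => isEA f ∧ isEA g
  | .ex _ f => isEA f
  | _ => False

/-- A holey {∀,∨}-formula: uses only holes, `∨` and `∀`. -/
def isAO : Holey → Prop
  | .hole _ => True
  | .disj f g => isAO f ∧ isAO g
  | .all _ f => isAO f
  | _ => False

/-- The holey formula is atomic (a single hole). -/
def isHole : Holey → Prop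
  | .hole _ => True
  | _ => False

/-- Free variables of a holey formula under an association `a` for the holes. -/
def hfree (a : ℕ → Finset ℕ) : Holey → Finset ℕ
  | .hole i => a i
  | .conj f g => hfree a f ∪ hfree a g
  | .disj f g => hfree a f ∪ hfree a g
  | .ex x f => hfree a f \ {x}
  | .all x f => hfree a f \ {x}

/-- Associativity rule on holey formulas (at the root). -/
inductive HRA : Holey → Holey → Prop
  | conj1 (f g h : Holey) : HRA (.conj f (.conj g h)) (.conj (.conj f g) h)
  | conj2 (f g h : Holey) : HRA (.conj (.conj f g) h) (.conj f (.conj g h))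
  | disj1 (f g h : Holey) : HRA (.disj f (.disj g h)) (.disj (.disj f g) h)
  | disj2 (f g h : Holey) : HRA (.disj (.disj f g) h) (.disj f (.disj g h))

/-- Commutativity rule on holey formulas (at the root). -/
inductive HRC : Holey → Holey → Prop
  | conj (f g : Holey) : HRC (.conj f g) (.conj g f)
  | disj (f g : Holey) : HRC (.disj f g) (.disj g f)

/-- Reordering rule on holey formulas (at the root). -/
inductive HRO : Holey → Holey → Prop
  | ex (x y : ℕ) (f : Holey) : HRO (.ex x (.ex y f)) (.ex y (.ex x f))
  | all (x y : ℕ) (f : Holey) : HRO (.all x (.all y f)) (.all y (.all x f))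

/-- Pushdown rule on holey formulas under an association (at the root). -/
inductive HRPd (a : ℕ → Finset ℕ) : Holey → Holey → Prop
  | ex (x : ℕ) (f g : Holey) : x ∉ hfree a g →
      HRPd a (.ex x (.conj f g)) (.conj (.ex x f) g)
  | all (x : ℕ) (f g : Holey) : x ∉ hfree a g →
      HRPd a (.all x (.disj f g)) (.disj (.all x f) g)

/-- Union of the root rules 𝒯 ∖ {N} on holey formulas, under association `a`. -/
def hrTnoN (a : ℕ → Finset ℕ) : Holey → Holey → Prop :=
  fun f g => HRA f g ∨ HRC f g ∨ HRO f g ∨ HRPd a f g ∨ HRPd a g f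

/-- Closure of a root rewriting relation on holey formulas under application at
any subformula position. -/
inductive HStep (r : Holey → Holey → Prop) : Holey → Holey → Prop
  | root {f g} : r f g → HStep r f g
  | conjL {f f' g} : HStep r f f' → HStep r (.conj f g) (.conj f' g)
  | conjR {f g g'} : HStep r g g' → HStep r (.conj f g) (.conj f g')
  | disjL {f f' g} : HStep r f f' → HStep r (.disj f g) (.disj f' g)
  | disjR {f g g'} : HStep r g g' → HStep r (.disj f g) (.disj f g')
  | exC {x f f'} : HStep r f f' → HStep r (.ex x f) (.ex x f')
  | allC {x f f'} : HStep r f f' → HStep r (.all x f) (.all x f')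

/-- The equivalence class of a holey formula under ↔* of the rules 𝒯∖{N}
(under association `a`). -/
def hcls (a : ℕ → Finset ℕ) (φ : Holey) : Set Holey :=
  {ψ | Relation.EqvGen (HStep (hrTnoN a)) φ ψ}

/-- List of all holey subformula occurrences. -/
def hsubformulas : Holey → List Holey
  | .hole i => [.hole i]
  | .conj f g => .conj f g :: (hsubformulas f ++ hsubformulas g)
  | .disj f g => .disj f g :: (hsubformulas f ++ hsubformulas g)
  | .ex x f => .ex x f :: hsubformulas f
  | .all x f => .all x f :: hsubformulas f

/-- Width of a holey formula under an association. -/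
def hwidth (a : ℕ → Finset ℕ) (φ : Holey) : ℕ :=
  ((hsubformulas φ).map fun ψ => (hfree a ψ).card).foldr max 0

/-- Minimum width over a set of holey formulas. -/
noncomputable def setHWidth (a : ℕ → Finset ℕ) (S : Set Holey) : ℕ :=
  sInf ((hwidth a) '' S)

/-- The multiset of quantified-variable occurrences of a holey formula. -/
def hQuantVars : Holey → Multiset ℕ
  | .hole _ => 0
  | .conj f g => hQuantVars f + hQuantVars g
  | .disj f g => hQuantVars f + hQuantVars g
  | .ex x f => x ::ₘ hQuantVars f
  | .all x f => x ::ₘ hQuantVars f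

/-- A holey formula (with association `a`) is standardized. -/
def HStandardized (a : ℕ → Finset ℕ) (φ : Holey) : Prop :=
  (hQuantVars φ).Nodup ∧ ∀ x ∈ hQuantVars φ, x ∉ hfree a φ

/-- Subformula relation on holey formulas. -/
inductive HSub : Holey → Holey → Prop
  | refl (φ : Holey) : HSub φ φ
  | conjL {ψ f g} : HSub ψ f → HSub ψ (.conj f g)
  | conjR {ψ f g} : HSub ψ g → HSub ψ (.conj f g)
  | disjL {ψ f g} : HSub ψ f → HSub ψ (.disj f g)
  | disjR {ψ f g} : HSub ψ g → HSub ψ (.disj f g)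
  | exS {ψ x f} : HSub ψ f → HSub ψ (.ex x f)
  | allS {ψ x f} : HSub ψ f → HSub ψ (.all x f)

/-- The multiset of conjuncts of a holey formula. -/
def hconjuncts : Holey → Multiset Holey
  | .conj f g => hconjuncts f + hconjuncts g
  | .hole i => {Holey.hole i}
  | .disj f g => {Holey.disj f g}
  | .ex x f => {Holey.ex x f}
  | .all x f => {Holey.all x f}

end Holey

open Holey

/-- Substituting formulas for the holes of a holey formula:  `φ⟦ψ⟧`. -/
def substH (ψ : ℕ → PFO) : Holey → PFO
  | .hole i => ψ i
  | .conj f g => .conj (substH ψ f) (substH ψ g)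
  | .disj f g => .disj (substH ψ f) (substH ψ g)
  | .ex x f => .ex x (substH ψ f)
  | .all x f => .all x (substH ψ f)

mutual
/-- {∃,∧}-organized formulas. -/
inductive OrganizedEA : PFO → Prop
  | mk (h : Holey) (ψ : ℕ → PFO) :
      Holey.isEA h → ¬ Holey.isHole h → (Holey.holes h).Nodup →
      (∀ i ∈ Holey.holes h, ¬ PFO.isAtom (ψ i) → OrganizedAO (ψ i)) →
      OrganizedEA (substH ψ h)
/-- {∀,∨}-organized formulas. -/
inductive OrganizedAO : PFO → Prop
  | mk (h : Holey) (ψ : ℕ → PFO) :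
      Holey.isAO h → ¬ Holey.isHole h → (Holey.holes h).Nodup →
      (∀ i ∈ Holey.holes h, ¬ PFO.isAtom (ψ i) → OrganizedEA (ψ i)) →
      OrganizedAO (substH ψ h)
end

/-- Names for the rewriting rules. -/
inductive RuleName : Type where
  | A | C | O | Pd | Pu | N | Sd | Su | M
  deriving DecidableEq

/-- The one-step rewriting relation of a named rule (applied at any subformula position). -/
def ruleRel : RuleName → PFO → PFO → Prop
  | .A => Step RA
  | .C => Step RC
  | .O => Step RO
  | .Pd => Step RPd
  | .Pu => Step RPu
  | .N => Step RN
  | .Sd => Step RSd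
  | .Su => Step RSu
  | .M => Step RM

/-- `Chain φ L θ`: a rewriting sequence from `φ` to `θ` applying the rules named in `L`
in order. -/
inductive Chain : PFO → List RuleName → PFO → Prop
  | nil (φ : PFO) : Chain φ [] φ
  | cons {φ ψ θ : PFO} {r : RuleName} {rs : List RuleName} :
      ruleRel r φ ψ → Chain ψ rs θ → Chain φ (r :: rs) θ

/-- A tree decomposition of the hypergraph with vertex set `V` and edge set `E`. -/
structure TreeDecomp (V : Finset ℕ) (E : Finset (Finset ℕ)) : Type 1 where
  ι : Type
  fin : Fintype ι
  T : SimpleGraph ι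
  tree : T.IsTree
  bag : ι → Finset ℕ
  bag_sub : ∀ t, bag t ⊆ V
  vertCover : ∀ v ∈ V, ∃ t, v ∈ bag t
  edgeCover : ∀ e ∈ E, ∃ t, e ⊆ bag t
  conn : ∀ v ∈ V, (T.induce {t | v ∈ bag t}).Connected

/-- The bagsize of a tree decomposition: the maximum bag size. -/
def TreeDecomp.bagsize {V : Finset ℕ} {E : Finset (Finset ℕ)} (D : TreeDecomp V E) : ℕ :=
  letI := D.fin
  Finset.univ.sup fun t => (D.bag t).card

/-- The treewidth of the hypergraph `(V, E)` (as an integer): the minimum bagsize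
over all tree decompositions, minus one. -/
noncomputable def treewidth (V : Finset ℕ) (E : Finset (Finset ℕ)) : ℤ :=
  sInf {n : ℤ | ∃ D : TreeDecomp V E, (D.bagsize : ℤ) = n} - 1

/-- Vertex set of the hypergraph of a holey formula with association `a`. -/
def holeyVerts (a : ℕ → Finset ℕ) (φ : Holey) : Finset ℕ :=
  (Holey.holes φ).toFinset.sup a

/-- Edge set of the hypergraph of a holey formula with association `a`:
an edge `a i` per hole `i`, plus the edge of the free variables. -/
def holeyEdges (a : ℕ → Finset ℕ) (φ : Holey) : Finset (Finset ℕ) :=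
  ((Holey.holes φ).toFinset.image a) ∪ {hfree a φ}

/-- The edges of the hypergraph of a pfo-formula: one edge per atom. -/
def atomEdges : PFO → Finset (Finset ℕ)
  | .atom _ vs => {vs.toFinset}
  | .conj f g => atomEdges f ∪ atomEdges g
  | .disj f g => atomEdges f ∪ atomEdges g
  | .ex _ f => atomEdges f
  | .all _ f => atomEdges f

/-- The vertices of the hypergraph of a pfo-formula: all variables of its atoms. -/
def atomVerts (φ : PFO) : Finset ℕ := (atomEdges φ).sup id

/-- The potential of a formula: the sum, over all subformula occurrences rooted at
a quantification, of the square of the number of atoms. -/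
def pot : PFO → ℕ
  | .atom _ _ => 0
  | .conj f g => pot f + pot g
  | .disj f g => pot f + pot g
  | .ex x f => atomCount (.ex x f) ^ 2 + pot f
  | .all x f => atomCount (.all x f) ^ 2 + pot f

/-- `⋈_x`: remove from a multiset of variable-sets all sets containing `x`, and add the
set obtained as the union of the removed sets with `x` deleted. -/
def joinVar (x : ℕ) (S : Multiset (Finset ℕ)) : Multiset (Finset ℕ) :=
  (S.filter (fun U => x ∉ U)) + {(S.filter (fun U => x ∈ U)).sup \ ({x} : Finset ℕ)}

/-- The multiset `mset_𝒯` of a holey formula under an association `a`. -/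
def msetT (a : ℕ → Finset ℕ) : Holey → Multiset (Finset ℕ)
  | .hole i => {a i}
  | .conj f g => msetT a f + msetT a g
  | .disj f g => msetT a f + msetT a g
  | .ex x f => joinVar x (msetT a f)
  | .all x f => joinVar x (msetT a f)

end WidthPaper
namespace WidthPaper
open Holey

lemma mem_msup {x : ℕ} {S : Multiset (Finset ℕ)} : x ∈ S.sup ↔ ∃ U ∈ S, x ∈ U := by
  induction S using Multiset.induction_on with
  | empty => simp [Multiset.sup_zero]
  | cons a s ih => simp [Multiset.sup_cons, ih]

lemma mem_msetT_subset (a : ℕ → Finset ℕ) (φ : Holey) :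
    ∀ U ∈ msetT a φ, U ⊆ hfree a φ := by
  induction φ with
  | hole i => simp [msetT, hfree]
  | conj f g ihf ihg =>
      intro U hU
      simp only [msetT, Multiset.mem_add] at hU
      rcases hU with h | h
      · exact (ihf U h).trans (Finset.subset_union_left)
      · exact (ihg U h).trans (Finset.subset_union_right)
  | disj f g ihf ihg =>
      intro U hU
      simp only [msetT, Multiset.mem_add] at hU
      rcases hU with h | h
      · exact (ihf U h).trans (Finset.subset_union_left)
      · exact (ihg U h).trans (Finset.subset_union_right)
  | ex x f ih =>
      intro U hU
      simp only [msetT, joinVar, Multiset.mem_add, Multiset.mem_filter,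
        Multiset.mem_singleton] at hU
      rcases hU with ⟨h1, h2⟩ | rfl
      · intro z hz
        simp only [hfree, Finset.mem_sdiff, Finset.mem_singleton]
        exact ⟨ih U h1 hz, fun hzx => h2 (hzx ▸ hz)⟩
      · intro z hz
        simp only [Finset.mem_sdiff, Finset.mem_singleton] at hz
        obtain ⟨hz1, hz2⟩ := hz
        obtain ⟨V, hV, hzV⟩ := mem_msup.mp hz1
        simp only [hfree, Finset.mem_sdiff, Finset.mem_singleton]
        exact ⟨ih V (Multiset.mem_of_mem_filter hV) hzV, hz2⟩
  | all x f ih =>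
      intro U hU
      simp only [msetT, joinVar, Multiset.mem_add, Multiset.mem_filter,
        Multiset.mem_singleton] at hU
      rcases hU with ⟨h1, h2⟩ | rfl
      · intro z hz
        simp only [hfree, Finset.mem_sdiff, Finset.mem_singleton]
        exact ⟨ih U h1 hz, fun hzx => h2 (hzx ▸ hz)⟩
      · intro z hz
        simp only [Finset.mem_sdiff, Finset.mem_singleton] at hz
        obtain ⟨hz1, hz2⟩ := hz
        obtain ⟨V, hV, hzV⟩ := mem_msup.mp hz1
        simp only [hfree, Finset.mem_sdiff, Finset.mem_singleton]
        exact ⟨ih V (Multiset.mem_of_mem_filter hV) hzV, hz2⟩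

lemma joinVar_add_right (x : ℕ) (S T : Multiset (Finset ℕ)) (h : ∀ U ∈ T, x ∉ U) :
    joinVar x (S + T) = joinVar x S + T := by
  unfold joinVar
  rw [Multiset.filter_add, Multiset.filter_add]
  rw [Multiset.filter_eq_self.mpr h]
  rw [Multiset.filter_eq_nil.mpr (fun U hU hx => h U hU hx)]
  rw [add_zero]
  exact add_right_comm _ _ _

end WidthPaper
namespace WidthPaper
open Holey

lemma side_char (x y z : ℕ) (S : Multiset (Finset ℕ)) :
    z ∈ ((((S.filter (fun U => x ∉ U)).filter (fun U => y ∈ U)).sup ⊔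
        ((S.filter (fun U => x ∈ U)).sup \ ({x} : Finset ℕ))) \ ({y} : Finset ℕ))
    ↔ z ≠ x ∧ z ≠ y ∧ ∃ U ∈ S, z ∈ U ∧ (x ∈ U ∨ y ∈ U) := by
  simp only [Finset.mem_sdiff, Finset.sup_eq_union, Finset.mem_union, mem_msup,
    Multiset.mem_filter, Finset.mem_singleton]
  constructor
  · rintro ⟨h, hzy⟩
    rcases h with ⟨U, ⟨⟨hUS, hxU⟩, hyU⟩, hzU⟩ | ⟨⟨U, ⟨hUS, hxU⟩, hzU⟩, hzx⟩
    · exact ⟨fun h => hxU (h ▸ hzU), hzy, U, hUS, hzU, Or.inr hyU⟩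
    · exact ⟨hzx, hzy, U, hUS, hzU, Or.inl hxU⟩
  · rintro ⟨hzx, hzy, U, hUS, hzU, hxy⟩
    refine ⟨?_, hzy⟩
    rcases hxy with hxU | hyU
    · exact Or.inr ⟨⟨U, ⟨hUS, hxU⟩, hzU⟩, hzx⟩
    · by_cases hxU : x ∈ U
      · exact Or.inr ⟨⟨U, ⟨hUS, hxU⟩, hzU⟩, hzx⟩
      · exact Or.inl ⟨U, ⟨⟨hUS, hxU⟩, hyU⟩, hzU⟩

lemma joinVar_comm (x y : ℕ) (S : Multiset (Finset ℕ)) :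
    joinVar x (joinVar y S) = joinVar y (joinVar x S) := by
  rcases eq_or_ne x y with rfl | hxy
  · rfl
  by_cases hboth : ∃ U ∈ S, x ∈ U ∧ y ∈ U
  · have expand : ∀ z w : ℕ, z ≠ w → (∃ U ∈ S, z ∈ U ∧ w ∈ U) →
        joinVar w (joinVar z S) =
          (S.filter (fun U => z ∉ U)).filter (fun U => w ∉ U) +
          {(((((S.filter (fun U => z ∉ U)).filter (fun U => w ∈ U)).sup ⊔
              ((S.filter (fun U => z ∈ U)).sup \ ({z} : Finset ℕ)))) \ ({w} : Finset ℕ))} := by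
      rintro z w hzw ⟨U, hU, hzU, hwU⟩
      have hw : w ∈ (S.filter (fun U => z ∈ U)).sup \ ({z} : Finset ℕ) := by
        simp only [Finset.mem_sdiff, mem_msup, Multiset.mem_filter, Finset.mem_singleton]
        exact ⟨⟨U, ⟨hU, hzU⟩, hwU⟩, Ne.symm hzw⟩
      show joinVar w (_ + _) = _
      unfold joinVar
      rw [Multiset.filter_add, Multiset.filter_add, Multiset.filter_singleton,
        Multiset.filter_singleton, if_neg (not_not_intro hw), if_pos hw,
        Multiset.sup_add, Multiset.sup_singleton]
      simp
    rw [expand y x (Ne.symm hxy) (by obtain ⟨U, h1, h2, h3⟩ := hboth; exact ⟨U, h1, h3, h2⟩),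
      expand x y hxy hboth]
    congr 1
    · rw [Multiset.filter_filter, Multiset.filter_filter]
      exact Multiset.filter_congr (fun U _ => by tauto)
    · congr 1
      ext z
      rw [side_char, side_char]
      constructor <;> rintro ⟨h1, h2, U, hU, hz, hc⟩ <;> exact ⟨h2, h1, U, hU, hz, hc.symm⟩
  · push_neg at hboth
    have expand : ∀ z w : ℕ, (∀ U ∈ S, z ∈ U → w ∉ U) →
        joinVar w (joinVar z S) =
          (S.filter (fun U => z ∉ U)).filter (fun U => w ∉ U) +
          ({(S.filter (fun U => z ∈ U)).sup \ ({z} : Finset ℕ)} +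
           {(S.filter (fun U => w ∈ U)).sup \ ({w} : Finset ℕ)}) := by
      intro z w h
      have hw : w ∉ (S.filter (fun U => z ∈ U)).sup \ ({z} : Finset ℕ) := by
        intro hmem
        rw [Finset.mem_sdiff] at hmem
        obtain ⟨U, hU, hwU⟩ := mem_msup.mp hmem.1
        rw [Multiset.mem_filter] at hU
        exact h U hU.1 hU.2 hwU
      have hfw : (S.filter (fun U => z ∉ U)).filter (fun U => w ∈ U)
          = S.filter (fun U => w ∈ U) := by
        rw [Multiset.filter_filter]
        exact Multiset.filter_congr (fun U hU => by
          constructor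
          · rintro ⟨h1, -⟩; exact h1
          · intro h1; exact ⟨h1, fun hz => h U hU hz h1⟩)
      show joinVar w (_ + _) = _
      unfold joinVar
      rw [Multiset.filter_add, Multiset.filter_add, Multiset.filter_singleton,
        Multiset.filter_singleton, if_pos hw, if_neg (by simpa using hw)]
      simp only [Multiset.empty_eq_zero, add_zero, hfw]
      abel
    have hboth' : ∀ U ∈ S, y ∈ U → x ∉ U := fun U hU hy hx => hboth U hU hx hy
    rw [expand y x hboth', expand x y hboth]
    congr 1
    · rw [Multiset.filter_filter, Multiset.filter_filter]
      exact Multiset.filter_congr (fun U _ => by tauto)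
    · exact add_comm _ _
end WidthPaper
open WidthPaper WidthPaper.PFO WidthPaper.Holey in
/-- `mset_𝒯` is invariant under applications of the rules in `𝒯 ∖ {N}`
to a holey {∃,∧}-formula `α`, under the association `i ↦ free (ψ i)`. -/
theorem msetT_invariant (ψ : ℕ → PFO) (α α' : Holey) (hEA : Holey.isEA α)
    (hstep : HStep (hrTnoN fun i => free (ψ i)) α α') :
    msetT (fun i => free (ψ i)) α = msetT (fun i => free (ψ i)) α' := by
  clear hEA
  induction hstep with
  | root h =>
    rcases h with hA | hC | hO | hPd | hPu
    · cases hA <;> simp [msetT, add_assoc]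
    · cases hC <;> simp [msetT, add_comm]
    · cases hO <;> simp [msetT, joinVar_comm]
    · cases hPd with
      | ex x f g hx =>
        simp only [msetT]
        exact joinVar_add_right x _ _
          (fun U hU hxU => hx (mem_msetT_subset _ g U hU hxU))
      | all x f g hx =>
        simp only [msetT]
        exact joinVar_add_right x _ _
          (fun U hU hxU => hx (mem_msetT_subset _ g U hU hxU))
    · cases hPu with
      | ex x f g hx =>
        simp only [msetT]
        exact (joinVar_add_right x _ _
          (fun U hU hxU => hx (mem_msetT_subset _ g U hU hxU))).symm
      | all x f g hx =>
        simp only [msetT]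
        exact (joinVar_add_right x _ _
          (fun U hU hxU => hx (mem_msetT_subset _ g U hU hxU))).symm
  | conjL h ih => simp [msetT, ih]
  | conjR h ih => simp [msetT, ih]
  | disjL h ih => simp [msetT, ih]
  | disjR h ih => simp [msetT, ih]
  | exC h ih => simp [msetT, ih]
  | allC h ih => simp [msetT, ih]
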